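/- If l is an integer and c ∈ 𝒮_N(k) are such that the automorphism ρ^l ∘ μ_c of 𝒩 is inner, then nm divides l, c_1 = 1, and c_i = 0 for 2 ≤ i ≤ N. -/

import Mathlib

/-- `pathProd e β i a` is the path `β_{i,a} = β_{i+a-1} ⋯ β_{i+1} β_i` of length `a`
starting at the vertex `i` of the cyclic quiver with vertex set `ZMod q`
(with `pathProd e β i 0 = e i` the trivial path at `i`). -/
def pathProd {q : ℕ} {R : Type*} [Mul R] (e β : ZMod q → R) (i : ZMod q) : ℕ → R
  | 0 => e i
  | a + 1 => β (i + (a : ZMod q)) * pathProd e β i a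

/-!
Let `y` be a unit with `(ρ^l ∘ μ_c)(x) = y⁻¹ x y`, i.e. `x y = y (ρ^l ∘ μ_c)(x)`. Taking the
coefficient of a trivial path `e_i` is multiplicative, so these coefficients of the unit `y`
are all nonzero; comparing the `e_0`-coefficients of `e_0 y = y e_l` forces `nm ∣ l`. Then
`ρ^l = id`, so `y` commutes with the `e_i` and with the arrows `β_i`, `i ≠ 0`. This makes the
coefficient `a_j` of `y` along a path of length `j·nm` independent of its starting vertex, and
`β_0 y = y u_c β_0` becomes the convolution identity `a_j = ∑_{s ≤ j} c_{s+1} a_{j-s}` for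
`j < N`. Since `a_0 ≠ 0`, this forces `c_1 = 1` and `c_i = 0` for `i ≥ 2`.
-/

open Finset

theorem map_pathProd {q : ℕ} {R S F : Type*} [Mul R] [Mul S] [FunLike F R S] [MulHomClass F R S]
    (f : F) (e β : ZMod q → R) (i : ZMod q) (a : ℕ) :
    f (pathProd e β i a) = pathProd (f ∘ e) (f ∘ β) i a := by
  induction a with
  | zero => rfl
  | succ a ih => simp only [pathProd, map_mul, ih, Function.comp_apply]

@[simp]
theorem pathProd_zero {q : ℕ} {R : Type*} [Mul R] (e β : ZMod q → R) (i : ZMod q) :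
    pathProd e β i 0 = e i := rfl

theorem pathProd_one {q : ℕ} {R : Type*} [Mul R] (e β : ZMod q → R) (i : ZMod q) :
    pathProd e β i 1 = β i * e i := by
  simp [pathProd]

theorem ZMod.apply_eq_apply_zero_of_apply_eq_apply_add_one {q : ℕ} [NeZero q] {X : Type*}
    {f : ZMod q → X} (hf : ∀ i ≠ 0, f i = f (i + 1)) (i : ZMod q) : f i = f 0 := by
  have hneg : ∀ s < q, f (-(s : ZMod q)) = f 0 := by
    intro s
    induction s with
    | zero => simp
    | succ s ih =>
      intro hs
      have hne : -((s + 1 : ℕ) : ZMod q) ≠ 0 := by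
        rw [neg_ne_zero, Ne, ZMod.natCast_eq_zero_iff]
        exact Nat.not_dvd_of_pos_of_lt (by omega) hs
      rw [hf _ hne, ← ih (by omega)]
      push_cast; ring_nf
  simpa using hneg (-i).val (ZMod.val_lt _)

theorem zpow_smul_eq_of_smul_eq_add_one {G X R : Type*} [Group G] [MulAction G X]
    [AddCommGroupWithOne R] {g : G} {f : R → X} (h : ∀ i, g • f i = f (i + 1)) (l : ℤ) (i : R) :
    g ^ l • f i = f (i + l) := by
  induction l using Int.induction_on generalizing i with
  | zero => simp
  | succ l ih => rw [zpow_add_one, mul_smul, h, ih]; congr 1; push_cast; abel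
  | pred l ih =>
    have h' : g⁻¹ • f i = f (i - 1) := by rw [inv_smul_eq_iff, h, sub_add_cancel]
    rw [zpow_sub_one, mul_smul, h', ih]; congr 1; push_cast; abel

theorem eq_ite_of_convolution_eq_self {R : Type*} [CommRing R] [IsDomain R] {a c : ℕ → R}
    {N : ℕ} (ha : a 0 ≠ 0) (h : ∀ j < N, ∑ s ∈ range (j + 1), c s * a (j - s) = a j) :
    ∀ j < N, c j = if j = 0 then 1 else 0 := by
  intro j
  induction j using Nat.strong_induction_on with
  | _ j ih =>
    intro hj
    have hlower : ∑ s ∈ range j, c s * a (j - s) = if j = 0 then 0 else a j := by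
      rw [Finset.sum_congr rfl fun s hs => by rw [ih s (mem_range.1 hs) (by simp at hs; omega)]]
      simp only [ite_mul, one_mul, zero_mul, sum_ite_eq', mem_range, Nat.sub_zero]
      split_ifs <;> first | rfl | omega
    have hj' := h j hj
    rw [sum_range_succ, hlower, Nat.sub_self] at hj'
    refine mul_right_cancel₀ ha ?_
    rcases Nat.eq_zero_or_pos j with rfl | hpos
    · simpa using hj'
    · rw [if_neg hpos.ne'] at hj' ⊢
      linear_combination hj'

theorem mul_mul_add_one_le_of_lt_ceil_div {s n m t : ℕ} (hn : 0 < n) (hm : 0 < m)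
    (hs : s < (t + n - 1) / n) : s * (n * m) + 1 ≤ t * m := by
  have h1 : s * n + 1 ≤ t := by
    have := (Nat.le_div_iff_mul_le hn).1 hs
    rw [Nat.succ_mul] at this
    omega
  calc s * (n * m) + 1 ≤ s * n * m + m := by rw [mul_assoc]; omega
    _ = (s * n + 1) * m := by ring
    _ ≤ t * m := Nat.mul_le_mul_right m h1

structure IsTruncatedPathBasis {k A : Type*} [CommSemiring k] [Semiring A] [Module k A] {q L : ℕ}
    (B : Module.Basis (ZMod q × Fin (L + 1)) k A) (e β : ZMod q → A) : Prop where
  basis_eq : ∀ x, B x = pathProd e β x.1 x.2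
  pathProd_mul : ∀ (i j : ZMod q) (a b : ℕ), a ≤ L → b ≤ L →
    pathProd e β j a * pathProd e β i b =
      if j = i + (b : ZMod q) ∧ a + b ≤ L then pathProd e β i (a + b) else 0

/-- Zero for `d > L`, where there is no basis path of length `d`. -/
noncomputable def pathCoeff {k A : Type*} [CommSemiring k] [AddCommMonoid A] [Module k A] {q L : ℕ}
    (B : Module.Basis (ZMod q × Fin (L + 1)) k A) (i : ZMod q) (d : ℕ) : A →ₗ[k] k :=
  if h : d ≤ L then B.coord (i, ⟨d, Nat.lt_succ_of_le h⟩) else 0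

namespace IsTruncatedPathBasis

variable {k A : Type*} [CommSemiring k] [Semiring A] [Algebra k A] {q L : ℕ} {e β : ZMod q → A}
  {B : Module.Basis (ZMod q × Fin (L + 1)) k A}

theorem pathCoeff_pathProd (hB : IsTruncatedPathBasis B e β) {a : ℕ} (ha : a ≤ L)
    (i j : ZMod q) (d : ℕ) :
    pathCoeff B i d (pathProd e β j a) = if j = i ∧ a = d then 1 else 0 := by
  rw [← hB.basis_eq (j, ⟨a, Nat.lt_succ_of_le ha⟩), pathCoeff]
  split_ifs with hd h h
  · simp [h.1, h.2]
  · simp only [Module.Basis.coord_apply, Module.Basis.repr_self, Finsupp.single_apply]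
    rw [if_neg]; rintro ⟨⟩; exact h ⟨rfl, rfl⟩
  · omega
  · rfl

theorem pathCoeff_pathProd_mul (hB : IsTruncatedPathBasis B e β) {a d : ℕ} (ha : a ≤ L)
    (hd : d ≤ L) (i j : ZMod q) (z : A) :
    pathCoeff B i d (pathProd e β j a * z) =
      if a ≤ d ∧ j = i + ((d - a : ℕ) : ZMod q) then pathCoeff B i (d - a) z else 0 := by
  suffices (pathCoeff B i d).comp (LinearMap.mulLeft k (pathProd e β j a)) =
      if a ≤ d ∧ j = i + ((d - a : ℕ) : ZMod q) then pathCoeff B i (d - a) else 0 by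
    have hz := LinearMap.congr_fun this z
    rw [LinearMap.comp_apply, LinearMap.mulLeft_apply] at hz
    rw [hz]
    split_ifs <;> rfl
  refine B.ext fun ⟨x, b, hb⟩ => ?_
  have hbL : b ≤ L := by omega
  rw [LinearMap.comp_apply, LinearMap.mulLeft_apply, hB.basis_eq, hB.pathProd_mul _ _ _ _ ha hbL]
  split_ifs with h1 h2 h2 <;>
    simp only [map_zero, LinearMap.zero_apply, hB.pathCoeff_pathProd hbL]
  · rw [hB.pathCoeff_pathProd h1.2]
    simp only [show a + b = d ↔ b = d - a by omega]
  · rw [hB.pathCoeff_pathProd h1.2, if_neg]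
    rintro ⟨rfl, rfl⟩
    exact h2 ⟨by omega, by simpa using h1.1⟩
  · rw [if_neg]
    rintro ⟨rfl, rfl⟩
    exact h1 ⟨h2.2, by omega⟩

theorem pathCoeff_mul_pathProd (hB : IsTruncatedPathBasis B e β) {a d : ℕ} (ha : a ≤ L)
    (hd : d ≤ L) (i j : ZMod q) (z : A) :
    pathCoeff B i d (z * pathProd e β j a) =
      if a ≤ d ∧ j = i then pathCoeff B (j + (a : ZMod q)) (d - a) z else 0 := by
  suffices (pathCoeff B i d).comp (LinearMap.mulRight k (pathProd e β j a)) =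
      if a ≤ d ∧ j = i then pathCoeff B (j + (a : ZMod q)) (d - a) else 0 by
    have hz := LinearMap.congr_fun this z
    rw [LinearMap.comp_apply, LinearMap.mulRight_apply] at hz
    rw [hz]
    split_ifs <;> rfl
  refine B.ext fun ⟨x, b, hb⟩ => ?_
  have hbL : b ≤ L := by omega
  simp only [LinearMap.comp_apply, LinearMap.mulRight_apply, hB.basis_eq,
    hB.pathProd_mul _ _ _ _ hbL ha]
  split_ifs with h1 h2 h2 <;>
    simp only [map_zero, LinearMap.zero_apply, hB.pathCoeff_pathProd hbL]
  · rw [hB.pathCoeff_pathProd h1.2]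
    simp only [h1.1, h2.2, true_and, show b + a = d ↔ b = d - a by omega]
  · rw [hB.pathCoeff_pathProd h1.2, if_neg]
    rintro ⟨rfl, rfl⟩
    exact h2 ⟨by omega, rfl⟩
  · rw [if_neg]
    rintro ⟨rfl, rfl⟩
    exact h1 ⟨rfl, by omega⟩

theorem pathCoeff_vertex_mul (hB : IsTruncatedPathBasis B e β) (i : ZMod q) (x z : A) :
    pathCoeff B i 0 (x * z) = pathCoeff B i 0 x * pathCoeff B i 0 z := by
  suffices (pathCoeff B i 0).comp (LinearMap.mulLeft k x) = pathCoeff B i 0 x • pathCoeff B i 0 by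
    simpa using LinearMap.congr_fun this z
  refine B.ext fun ⟨p, b, hb⟩ => ?_
  have hbL : b ≤ L := by omega
  simp only [LinearMap.comp_apply, LinearMap.mulLeft_apply, LinearMap.smul_apply, hB.basis_eq,
    hB.pathCoeff_mul_pathProd hbL (Nat.zero_le L), hB.pathCoeff_pathProd hbL, smul_eq_mul]
  by_cases hb0 : b = 0
  · subst hb0
    by_cases hp : p = i <;> simp [hp]
  · simp [hb0]

theorem pathCoeff_vertex_one (hB : IsTruncatedPathBasis B e β) (i : ZMod q) :
    pathCoeff B i 0 (1 : A) = 1 := by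
  have he : pathCoeff B i 0 (e i) = 1 := by
    simpa using hB.pathCoeff_pathProd (Nat.zero_le L) i i 0
  have h := hB.pathCoeff_vertex_mul i 1 (e i)
  rw [one_mul, he, mul_one] at h
  exact h.symm

theorem isUnit_pathCoeff_vertex (hB : IsTruncatedPathBasis B e β) {y : A} (hy : IsUnit y)
    (i : ZMod q) : IsUnit (pathCoeff B i 0 y) := by
  obtain ⟨u, rfl⟩ := hy
  refine IsUnit.of_mul_eq_one (pathCoeff B i 0 ↑u⁻¹) ?_
  rw [← hB.pathCoeff_vertex_mul, u.mul_inv, hB.pathCoeff_vertex_one]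

theorem eq_of_vertex_mul_eq_mul_vertex [Nontrivial k] (hB : IsTruncatedPathBasis B e β) {y : A}
    (hy : IsUnit y) {i j : ZMod q} (h : e i * y = y * e j) : j = i := by
  have hcoeff := congrArg (pathCoeff B i 0) h
  have he : ∀ j, pathCoeff B i 0 (e j) = if j = i then 1 else 0 := fun j => by
    simpa using hB.pathCoeff_pathProd (Nat.zero_le L) i j 0
  rw [hB.pathCoeff_vertex_mul, hB.pathCoeff_vertex_mul, he, he, if_pos rfl, one_mul] at hcoeff
  by_contra hji
  rw [if_neg hji, mul_zero] at hcoeff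
  exact (hB.isUnit_pathCoeff_vertex hy i).ne_zero hcoeff

theorem algHom_ext (hB : IsTruncatedPathBasis B e β) {C : Type*} [Semiring C] [Algebra k C]
    {f g : A →ₐ[k] C} (he : ∀ i, f (e i) = g (e i)) (hβ : ∀ i, f (β i) = g (β i)) : f = g := by
  refine AlgHom.toLinearMap_injective (B.ext fun x => ?_)
  simp only [AlgHom.toLinearMap_apply, hB.basis_eq, map_pathProd]
  congr 1 <;> funext i <;> simp [he, hβ]

theorem zpow_apply_eq_self (hB : IsTruncatedPathBasis B e β) {ρ : A ≃ₐ[k] A}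
    (hρe : ∀ i, ρ (e i) = e (i + 1)) (hρβ : ∀ i, ρ (β i) = β (i + 1)) {l : ℤ}
    (hl : (l : ZMod q) = 0) (x : A) : (ρ ^ l) x = x := by
  refine DFunLike.congr_fun (hB.algHom_ext (f := (ρ ^ l).toAlgHom) (g := AlgHom.id k A) ?_ ?_) x
  · intro i
    simpa [hl] using zpow_smul_eq_of_smul_eq_add_one (g := ρ) (f := e) hρe l i
  · intro i
    simpa [hl] using zpow_smul_eq_of_smul_eq_add_one (g := ρ) (f := β) hρβ l i

theorem pathCoeff_eq_of_commute (hB : IsTruncatedPathBasis B e β) {y : A} {i : ZMod q}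
    (h : Commute (pathProd e β i 1) y) {d : ℕ} (hdq : (d : ZMod q) = 0) (hd : d + 1 ≤ L) :
    pathCoeff B i d y = pathCoeff B (i + 1) d y := by
  have hcoeff := congrArg (pathCoeff B i (d + 1)) h.eq
  rwa [hB.pathCoeff_pathProd_mul (by omega) hd, hB.pathCoeff_mul_pathProd (by omega) hd,
    if_pos ⟨by omega, by simp [hdq]⟩, if_pos ⟨by omega, rfl⟩, Nat.add_sub_cancel, Nat.cast_one]
    at hcoeff

theorem pathCoeff_eq_pathCoeff_zero_of_commute [NeZero q] (hB : IsTruncatedPathBasis B e β)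
    {y : A} (h : ∀ i ≠ 0, Commute (pathProd e β i 1) y) {d : ℕ} (hdq : (d : ZMod q) = 0)
    (hd : d + 1 ≤ L) (i : ZMod q) : pathCoeff B i d y = pathCoeff B 0 d y :=
  ZMod.apply_eq_apply_zero_of_apply_eq_apply_add_one
    (f := fun i => pathCoeff B i d y) (fun i hi => hB.pathCoeff_eq_of_commute (h i hi) hdq hd) i

theorem pathCoeff_recurrence [NeZero q] (hB : IsTruncatedPathBasis B e β) {y : A}
    {c : ℕ → k} {N : ℕ} (hN : ∀ s < N, s * q + 1 ≤ L)
    (hcomm : ∀ i ≠ 0, Commute (pathProd e β i 1) y)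
    (h0 : pathProd e β 0 1 * y =
      y * ((∑ s ∈ range N, c s • pathProd e β 1 (s * q)) * pathProd e β 0 1))
    {j : ℕ} (hj : j < N) :
    ∑ s ∈ range (j + 1), c s * pathCoeff B 0 ((j - s) * q) y = pathCoeff B 0 (j * q) y := by
  have hL : 1 ≤ L := by have := hN 0 (by omega); omega
  have hprod : (∑ s ∈ range N, c s • pathProd e β 1 (s * q)) * pathProd e β 0 1 =
      ∑ s ∈ range N, c s • pathProd e β 0 (s * q + 1) := by
    rw [sum_mul]
    refine sum_congr rfl fun s hs => ?_
    have hs := hN s (mem_range.1 hs)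
    rw [smul_mul_assoc, hB.pathProd_mul _ _ _ _ (by omega) hL, if_pos ⟨by simp, hs⟩]
  have hterm : ∀ s ∈ range N, pathCoeff B 0 (j * q + 1) (y * (c s • pathProd e β 0 (s * q + 1))) =
      if s ≤ j then c s * pathCoeff B 0 ((j - s) * q) y else 0 := by
    intro s hs
    have hs := hN s (mem_range.1 hs)
    rw [mul_smul_comm, map_smul, hB.pathCoeff_mul_pathProd hs (hN j hj), smul_eq_mul]
    by_cases hsj : s ≤ j
    · have hle : s * q ≤ j * q := Nat.mul_le_mul_right q hsj
      have hlen : j * q + 1 - (s * q + 1) = (j - s) * q := by rw [Nat.sub_mul]; omega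
      rw [if_pos ⟨by omega, rfl⟩, if_pos hsj, hlen, show ((s * q + 1 : ℕ) : ZMod q) = 1 by simp,
        zero_add, hB.pathCoeff_eq_pathCoeff_zero_of_commute hcomm (by simp)
          (hN (j - s) (by omega) |>.trans' (by omega))]
    · rw [if_neg fun h => hsj (Nat.le_of_mul_le_mul_right (by omega) (Nat.pos_of_neZero q)),
        if_neg hsj, mul_zero]
  have hcoeff := congrArg (pathCoeff B 0 (j * q + 1)) h0
  rw [hprod, mul_sum, map_sum, sum_congr rfl hterm, ← sum_filter,
    hB.pathCoeff_pathProd_mul hL (hN j hj), if_pos ⟨by omega, by simp⟩, Nat.add_sub_cancel]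
    at hcoeff
  rw [hcoeff]
  refine sum_congr (ext fun s => ?_) fun _ _ => rfl
  simp only [mem_range, mem_filter]
  omega

end IsTruncatedPathBasis

/-- if `l` is an integer and `c ∈ 𝒮_N(k)` are such that the automorphism
`ρ^l ∘ μ_c` of the selfinjective Nakayama algebra `𝒩 = 𝒩_{nm,tm}` is inner, then `nm ∣ l`,
`c_1 = 1` and `c_i = 0` for `2 ≤ i ≤ N`. Here `𝒩` is presented by idempotents `e i` and
arrows `β i` with basis the paths of length `≤ tm` and concatenation product,
`N = ⌊(t+n−1)/n⌋`, `ρ` is the rotation and `μ_c` fixes all `e i` and all `β i` (`i ≠ 0`)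
and sends `β 0` to `u_c β 0` with `u_c = ∑_{i=1}^N c_i β_{1,(i−1)nm}`. -/
theorem inner_rho_mu {k : Type*} [Field k] (m n t : ℕ)
    (hm : 0 < m) (hn : 0 < n) (ht : 0 < t)
    [NeZero (n * m)]
    {𝒩 : Type*} [Ring 𝒩] [Algebra k 𝒩] (e β : ZMod (n * m) → 𝒩)
    (hbasis : ∃ B : Module.Basis (ZMod (n * m) × Fin (t * m + 1)) k 𝒩,
      ∀ x, B x = pathProd e β x.1 x.2)
    (hmul : ∀ (i j : ZMod (n * m)) (a b : ℕ), a ≤ t * m → b ≤ t * m →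
      pathProd e β j a * pathProd e β i b =
        if j = i + (b : ZMod (n * m)) ∧ a + b ≤ t * m then pathProd e β i (a + b) else 0)
    (c : Fin ((t + n - 1) / n) → k)
    (μ : 𝒩 ≃ₐ[k] 𝒩)
    (hμe : ∀ i, μ (e i) = e i)
    (hμβ : ∀ i, i ≠ 0 → μ (β i) = β i)
    (hμβ0 : μ (β 0) =
      (∑ i : Fin ((t + n - 1) / n), c i • pathProd e β 1 ((i : ℕ) * (n * m))) * β 0)
    (ρ : 𝒩 ≃ₐ[k] 𝒩)
    (hρe : ∀ i, ρ (e i) = e (i + 1)) (hρβ : ∀ i, ρ (β i) = β (i + 1))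
    (l : ℤ)
    (hinner : ∃ y : 𝒩ˣ, ∀ x : 𝒩, (ρ ^ l * μ) x = ↑y⁻¹ * x * ↑y) :
    ((n * m : ℕ) : ℤ) ∣ l ∧ c ⟨0, Nat.div_pos (by omega) hn⟩ = 1 ∧
      ∀ i : Fin ((t + n - 1) / n), 1 ≤ (i : ℕ) → c i = 0 := by
  obtain ⟨B, hB⟩ := hbasis
  have hP : IsTruncatedPathBasis B e β := ⟨hB, hmul⟩
  obtain ⟨y, hy⟩ := hinner
  have hconj : ∀ x, x * y = y * (ρ ^ l * μ) x := fun x => by rw [hy]; simp [mul_assoc]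
  have hρe' : ∀ i, (ρ ^ l) (e i) = e (i + l) :=
    zpow_smul_eq_of_smul_eq_add_one (g := ρ) (f := e) hρe l
  have hl : (l : ZMod (n * m)) = 0 := by
    simpa using hP.eq_of_vertex_mul_eq_mul_vertex y.isUnit (by simpa [hμe, hρe'] using hconj (e 0))
  refine ⟨(ZMod.intCast_zmod_eq_zero_iff_dvd l _).1 hl, ?_⟩
  have hμy : ∀ x, x * y = y * μ x := fun x => by
    simpa [AlgEquiv.mul_apply, hP.zpow_apply_eq_self hρe hρβ hl] using hconj x
  have hcomm : ∀ i ≠ 0, Commute (pathProd e β i 1) y := fun i hi =>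
    (hμy _).trans (by rw [pathProd_one, map_mul, hμe, hμβ i hi])
  let c' : ℕ → k := fun s => if h : s < (t + n - 1) / n then c ⟨s, h⟩ else 0
  have hu : ∑ i : Fin ((t + n - 1) / n), c i • pathProd e β 1 ((i : ℕ) * (n * m)) =
      ∑ s ∈ range ((t + n - 1) / n), c' s • pathProd e β 1 (s * (n * m)) := by
    rw [← Fin.sum_univ_eq_sum_range]
    simp [c']
  have h0 : pathProd e β 0 1 * y =
      y * ((∑ s ∈ range ((t + n - 1) / n), c' s • pathProd e β 1 (s * (n * m))) *
        pathProd e β 0 1) := by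
    rw [hμy, ← hu, pathProd_one, map_mul, hμβ0, hμe, mul_assoc]
  have hc := eq_ite_of_convolution_eq_self (a := fun j => pathCoeff B 0 (j * (n * m)) y)
    (by simpa using (hP.isUnit_pathCoeff_vertex y.isUnit 0).ne_zero)
    (fun j hj => hP.pathCoeff_recurrence (fun s hs => mul_mul_add_one_le_of_lt_ceil_div hn hm hs)
      hcomm h0 hj)
  refine ⟨?_, fun i hi => ?_⟩
  · have hN0 : 0 < (t + n - 1) / n := Nat.div_pos (by omega) hn
    simpa only [c', dif_pos hN0, if_pos] using hc 0 hN0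
  · simpa [c', Nat.one_le_iff_ne_zero.1 hi] using hc i i.isLt
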